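/- arXiv:2508.20853 — 3 statements merged into one kernel-verified Lean document; each statement's English description precedes it below -/
import Mathlib

section
/- Let n ≥ 4 be even. The set T(n) = { r : r ∈ S(n) and r + 1 ∉ S(n+1) } equals { (n-2)/3 } if n ≡ 2 (mod 3), and is empty otherwise. -/
def S (n : ℕ) : Finset ℕ := (Finset.Icc 1 (n / 2)).image (fun k => n % k)

def T (n : ℕ) : Finset ℕ := (S n).filter (fun r => r + 1 ∉ S (n + 1))

lemma mem_S_iff {n r : ℕ} : r ∈ S n ↔ ∃ k, 1 ≤ k ∧ k ≤ n / 2 ∧ n % k = r := by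
  simp [S, Finset.mem_image, Finset.mem_Icc, and_assoc]

lemma mod_succ {n k r : ℕ} (hr : n % k = r) (hlt : r + 1 < k) : (n + 1) % k = r + 1 := by
  have h1 : (n + 1) % k = (n % k + 1 % k) % k := Nat.add_mod n 1 k
  have hk1 : (1 : ℕ) % k = 1 := Nat.mod_eq_of_lt (by omega)
  rw [h1, hr, hk1]
  exact Nat.mod_eq_of_lt hlt

lemma mem_T_iff {n r : ℕ} (hn : 4 ≤ n) (heven : Even n) :
    r ∈ T n ↔ n = 3 * r + 2 := by
  obtain ⟨m, hm⟩ := heven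
  rw [T, Finset.mem_filter, mem_S_iff, mem_S_iff]
  push_neg
  constructor
  · rintro ⟨⟨k, hk1, hk2, hr⟩, h2⟩
    have hk0 : 0 < k := hk1
    have hrk : r < k := hr ▸ Nat.mod_lt n hk0
    have hk : k = r + 1 := by
      by_contra h
      have hlt : r + 1 < k := by omega
      exact h2 k hk1 (by omega) (mod_succ hr hlt)
    subst hk
    have hdm := Nat.div_add_mod n (r + 1)
    set q := n / (r + 1) with hqdef
    have hq : n = (r + 1) * q + r := by omega
    -- q+1 is odd since (r+1)*(q+1) = n+1 is odd
    have hodd : Odd ((r + 1) * (q + 1)) := by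
      have : (r + 1) * (q + 1) = n + 1 := by rw [hq]; ring
      rw [this]
      exact ⟨m, by omega⟩
    rw [Nat.odd_mul] at hodd
    obtain ⟨⟨a, ha⟩, ⟨b, hb⟩⟩ := hodd
    -- so q is even
    have hqeven : q = 2 * b := by omega
    -- q ≥ 2 since r + 1 ≤ n / 2
    have h2k : 2 * (r + 1) ≤ n := by omega
    have hq2 : 2 ≤ q := by
      rcases Nat.lt_or_ge q 2 with h | h
      · interval_cases q <;> omega
      · exact h
    rcases Nat.lt_or_ge q 3 with h | h
    · -- q = 2 : conclude
      have : q = 2 := by omega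
      rw [this] at hq; omega
    · -- q ≥ 4 (even), derive contradiction
      exfalso
      have hb2 : 2 ≤ b := by omega
      set d := (r + 1) * b with hddef
      have hd1 : n + 1 = 2 * d + (r + 1) := by
        rw [hq, hqeven, hddef]; ring
      have hdlt : r + 1 < d := by
        have : (r + 1) * 2 ≤ (r + 1) * b := Nat.mul_le_mul_left _ hb2
        omega
      have hmodd : (n + 1) % d = r + 1 := by
        rw [show n + 1 = d * 2 + (r + 1) by omega, Nat.mul_add_mod]
        exact Nat.mod_eq_of_lt hdlt
      exact h2 d (by omega) (by omega) hmodd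
  · intro h32
    refine ⟨⟨r + 1, by omega, by omega, ?_⟩, ?_⟩
    · rw [show n = (r + 1) * 2 + r by omega, Nat.mul_add_mod]
      exact Nat.mod_eq_of_lt (by omega)
    · rintro k hk1 hk2 hmod
      have hrk : r + 1 < k := hmod ▸ Nat.mod_lt (n + 1) hk1
      have hdm := Nat.div_add_mod (n + 1) k
      set q := (n + 1) / k with hqdef
      have hq : k * q = 2 * r + 2 := by omega
      have h2k : 2 * k ≤ n + 1 := by omega
      have hqlt : q < 2 := by
        by_contra h
        push_neg at h
        have : k * 2 ≤ k * q := Nat.mul_le_mul_left _ h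
        omega
      interval_cases q <;> omega

theorem T_even (n : ℕ) (hn : 4 ≤ n) (heven : Even n) :
    T n = if n % 3 = 2 then {(n - 2) / 3} else ∅ := by
  split_ifs with h3
  · ext r
    rw [mem_T_iff hn heven, Finset.mem_singleton]
    omega
  · ext r
    rw [mem_T_iff hn heven]
    simp only [Finset.notMem_empty, iff_false]
    omega
end

section
/- The limit inferior of s(n+1) - s(n) as n → ∞ is -∞; that is, for every M there exist infinitely many n with s(n) - s(n+1) ≥ M. -/
def s (n : ℕ) : ℕ := (S n).card

/-- `GoodK p K`: every `k ∈ K` is a divisor of `p+1` with cofactor `q+1` for a prime `q`,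
and all prime factors of `k` are at least `q`. -/
def GoodK (p : ℕ) (K : Finset ℕ) : Prop :=
  ∀ k ∈ K, ∃ q : ℕ, q.Prime ∧ k * (q + 1) = p + 1 ∧ ∀ ℓ : ℕ, ℓ.Prime → ℓ ∣ k → q ≤ ℓ

lemma mem_S {n x : ℕ} : x ∈ S n ↔ ∃ k, (1 ≤ k ∧ k ≤ n / 2) ∧ n % k = x := by
  simp [S, Finset.mem_image, Finset.mem_Icc]

lemma step (p : ℕ) (hp : p.Prime) (K : Finset ℕ) (hK : GoodK p K) :
    ∃ p' : ℕ, p'.Prime ∧ p < p' ∧ ∃ K' : Finset ℕ,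
      K'.card = K.card + 1 ∧ GoodK p' K' := by
  classical
  set F : ℕ := Nat.factorial (p - 1) with hF
  set Q : ℕ := (p + 1) * F with hQ
  have hFpos : 0 < F := Nat.factorial_pos _
  have hQpos : 0 < Q := Nat.mul_pos (Nat.succ_pos p) hFpos
  haveI : NeZero Q := ⟨hQpos.ne'⟩
  have hcop : Nat.Coprime p Q := by
    apply Nat.Coprime.mul_right
    · exact Nat.coprime_self_add_right.mpr (Nat.coprime_one_right p)
    · rw [hF]
      refine (Nat.Prime.coprime_iff_not_dvd hp).mpr (fun hd => ?_)
      have h1 := (Nat.Prime.dvd_factorial hp).mp hd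
      have h2 := hp.two_le
      omega
  have hunit : IsUnit ((p : ZMod Q)) := (ZMod.isUnit_iff_coprime p Q).mpr hcop
  obtain ⟨p', hp'gt, hp'prime, hp'mod⟩ := Nat.forall_exists_prime_gt_and_eq_mod hunit p
  have hmodeq : p' ≡ p [MOD Q] := (ZMod.natCast_eq_natCast_iff p' p Q).mp hp'mod
  have hdvd : Q ∣ p' - p := (Nat.modEq_iff_dvd' (le_of_lt hp'gt)).mp hmodeq.symm
  obtain ⟨t, ht⟩ := hdvd
  have htpos : 1 ≤ t := by
    rcases Nat.eq_zero_or_pos t with h0 | h1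
    · exfalso; rw [h0, Nat.mul_zero] at ht; omega
    · exact h1
  have hp'eq : p' = p + Q * t := by omega
  set w : ℕ := 1 + F * t with hw
  have hfact : p' + 1 = (p + 1) * w := by
    rw [hp'eq, hQ, hw]; ring
  have hw2 : 2 ≤ w := by
    have h1 : 1 ≤ F * t := Nat.mul_pos hFpos htpos
    omega
  have hwprime : ∀ ℓ : ℕ, ℓ.Prime → ℓ ∣ w → p ≤ ℓ := by
    intro ℓ hℓ hℓw
    by_contra hlt
    push_neg at hlt
    have hle : ℓ ≤ p - 1 := by have := hp.two_le; omega
    have h1 : ℓ ∣ F * t := Dvd.dvd.mul_right (hF ▸ Nat.dvd_factorial hℓ.pos hle) t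
    have h2 : ℓ ∣ 1 := by
      have h3 : ℓ ∣ F * t + 1 := by rwa [hw, Nat.add_comm] at hℓw
      exact (Nat.dvd_add_right h1).mp h3
    exact absurd (Nat.dvd_one.mp h2) hℓ.ne_one
  refine ⟨p', hp'prime, hp'gt, insert 1 (K.image (· * w)), ?_, ?_⟩
  · have hinj : Function.Injective (· * w) := fun a b h => by
      exact Nat.eq_of_mul_eq_mul_right (by omega) h
    have h1notin : (1 : ℕ) ∉ K.image (· * w) := by
      intro h
      obtain ⟨k, _, hk1⟩ := Finset.mem_image.mp h
      have : w ≤ 1 := Nat.le_of_dvd one_pos (Dvd.intro_left k hk1)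
      omega
    rw [Finset.card_insert_of_notMem h1notin, Finset.card_image_of_injective _ hinj]
  · intro k' hk'
    rcases Finset.mem_insert.mp hk' with h1 | himg
    · refine ⟨p', hp'prime, by rw [h1, one_mul], ?_⟩
      intro ℓ hℓ hdvd1
      rw [h1] at hdvd1
      exact absurd (Nat.dvd_one.mp hdvd1) hℓ.ne_one
    · obtain ⟨k, hkK, hkw⟩ := Finset.mem_image.mp himg
      obtain ⟨q, hq, hkq, hkl⟩ := hK k hkK
      have hkpos : 1 ≤ k := by
        rcases Nat.eq_zero_or_pos k with h0 | h1
        · rw [h0, zero_mul] at hkq; omega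
        · exact h1
      have hqp : q ≤ p := by
        have := Nat.le_mul_of_pos_left (q + 1) hkpos
        omega
      refine ⟨q, hq, ?_, ?_⟩
      · rw [← hkw]
        calc k * w * (q + 1) = k * (q + 1) * w := by ring
          _ = (p + 1) * w := by rw [hkq]
          _ = p' + 1 := hfact.symm
      · intro ℓ hℓ hdvd2
        rw [← hkw] at hdvd2
        rcases (Nat.Prime.dvd_mul hℓ).mp hdvd2 with h | h
        · exact hkl ℓ hℓ h
        · exact le_trans hqp (hwprime ℓ hℓ h)

lemma chain (r N : ℕ) : ∃ p : ℕ, p.Prime ∧ N < p ∧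
    ∃ K : Finset ℕ, K.card = r ∧ GoodK p K := by
  induction r with
  | zero =>
    obtain ⟨p, hle, hp⟩ := Nat.exists_infinite_primes (N + 1)
    exact ⟨p, hp, by omega, ∅, rfl, fun k hk => absurd hk (Finset.notMem_empty k)⟩
  | succ n ih =>
    obtain ⟨p, hp, hNp, K, hcard, hgood⟩ := ih
    obtain ⟨p', hp', hpp', K', hcard', hgood'⟩ := step p hp K hgood
    exact ⟨p', hp', by omega, K', by omega, hgood'⟩

lemma not_in_S (p : ℕ) (k q : ℕ) (hq : q.Prime) (hkq : k * (q + 1) = p + 1)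
    (hkl : ∀ ℓ : ℕ, ℓ.Prime → ℓ ∣ k → q ≤ ℓ) : k ∉ S (p + 1) := by
  intro hmem
  obtain ⟨k', ⟨hk'1, hk'2⟩, hmod⟩ := mem_S.mp hmem
  have hk'pos : 0 < k' := hk'1
  have hklt : k < k' := hmod ▸ Nat.mod_lt _ hk'pos
  have h2k' : 2 * k' ≤ p + 1 := by
    have := (Nat.le_div_iff_mul_le (by norm_num : 0 < 2)).mp hk'2
    omega
  set a := (p + 1) / k' with ha
  have hda : k' * a + k = p + 1 := by
    rw [ha]
    have := Nat.div_add_mod (p + 1) k'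
    omega
  have hkpos : 1 ≤ k := by
    rcases Nat.eq_zero_or_pos k with h0 | h1
    · rw [h0, zero_mul] at hkq; omega
    · exact h1
  have hq2 : 2 ≤ q := hq.two_le
  have hkq' : k * q + k = p + 1 := by
    have h : k * (q + 1) = k * q + k := by ring
    omega
  have hka : k' * a = k * q := by omega
  have hapos : 0 < a := by
    rcases Nat.eq_zero_or_pos a with h0 | h1
    · exfalso
      rw [h0, Nat.mul_zero] at hka
      have : 0 < k * q := Nat.mul_pos hkpos (by omega)
      omega
    · exact h1
  have hane1 : a ≠ 1 := by
    intro h1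
    rw [h1, Nat.mul_one] at hka
    have h' : k * q ≤ k * 1 := by omega
    have := Nat.le_of_mul_le_mul_left h' hkpos
    omega
  have haq : a < q := by
    by_contra hge
    push_neg at hge
    have h1 : k' * q ≤ k' * a := Nat.mul_le_mul le_rfl hge
    have h2 : k * q < k' * q := Nat.mul_lt_mul_of_pos_right hklt (by omega)
    omega
  obtain ⟨ℓ, hℓ, hℓa⟩ := Nat.exists_prime_and_dvd hane1
  have hℓle : ℓ ≤ a := Nat.le_of_dvd hapos hℓa
  have hℓkq : ℓ ∣ k * q := by
    rw [← hka]
    exact Dvd.dvd.mul_left hℓa k'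
  rcases (Nat.Prime.dvd_mul hℓ).mp hℓkq with h | h
  · have := hkl ℓ hℓ h; omega
  · have := (Nat.prime_dvd_prime_iff_eq hℓ hq).mp h; omega

lemma main_count (p : ℕ) (hp3 : 3 ≤ p) (K : Finset ℕ) (hgood : GoodK p K) :
    s (p + 1) + K.card ≤ s p + 1 := by
  classical
  set m := p + 1 with hm
  have hKpos : ∀ k ∈ K, 1 ≤ k := by
    intro k hk
    obtain ⟨q, hq, hkq, _⟩ := hgood k hk
    rcases Nat.eq_zero_or_pos k with h0 | h1
    · rw [h0, zero_mul] at hkq; omega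
    · exact h1
  have h0Sm : (0 : ℕ) ∈ S m := by
    rw [mem_S]
    exact ⟨1, ⟨le_refl 1, by omega⟩, Nat.mod_one m⟩
  set A := (S m).erase 0 with hA
  set B := A.image (· - 1) with hB
  set D := K.image (· - 1) with hD
  have hBS : B ⊆ S p := by
    intro y hy
    obtain ⟨x, hxA, hxy⟩ := Finset.mem_image.mp hy
    have hxne : x ≠ 0 := (Finset.mem_erase.mp hxA).1
    have hxS : x ∈ S m := (Finset.mem_erase.mp hxA).2
    obtain ⟨k, ⟨hk1, hk2⟩, hmod⟩ := mem_S.mp hxS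
    have h2k : 2 * k ≤ m := by
      have := (Nat.le_div_iff_mul_le (by norm_num : 0 < 2)).mp hk2
      omega
    have hxk : x < k := hmod ▸ Nat.mod_lt _ (by omega)
    have hdm : k * (m / k) + x = m := by
      have := Nat.div_add_mod m k
      omega
    have h2klt : 2 * k ≤ p := by
      rcases Nat.lt_or_ge (2 * k) m with hlt | hge
      · omega
      · exfalso
        have hx0 : x = 0 := by
          rw [← hmod, (by omega : m = k * 2)]
          simp [Nat.mul_mod_right]
        exact hxne hx0
    rw [mem_S]
    refine ⟨k, ⟨hk1, (Nat.le_div_iff_mul_le (by norm_num : 0 < 2)).mpr (by omega)⟩, ?_⟩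
    rw [← hxy]
    have hpe : p = (x - 1) + k * (m / k) := by omega
    rw [hpe, Nat.add_mul_mod_self_left]
    exact Nat.mod_eq_of_lt (by omega)
  have hDS : D ⊆ S p := by
    intro y hy
    obtain ⟨k, hkK, hky⟩ := Finset.mem_image.mp hy
    obtain ⟨q, hq, hkq, _⟩ := hgood k hkK
    have hkpos := hKpos k hkK
    have hq2 := hq.two_le
    have hkq' : k * q + k = p + 1 := by
      have h : k * (q + 1) = k * q + k := by ring
      omega
    have h2kp : 2 * k ≤ p := by
      have h1 : k * 2 ≤ k * q := Nat.mul_le_mul le_rfl hq2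
      omega
    rw [mem_S]
    refine ⟨k, ⟨hkpos, (Nat.le_div_iff_mul_le (by norm_num : 0 < 2)).mpr (by omega)⟩, ?_⟩
    rw [← hky]
    have hpe : p = (k - 1) + k * q := by omega
    rw [hpe, Nat.add_mul_mod_self_left]
    exact Nat.mod_eq_of_lt (by omega)
  have hBD : Disjoint B D := by
    rw [Finset.disjoint_left]
    intro y hyB hyD
    obtain ⟨x, hxA, hxy⟩ := Finset.mem_image.mp hyB
    obtain ⟨k, hkK, hky⟩ := Finset.mem_image.mp hyD
    have hxy' : x - 1 = y := hxy
    have hky' : k - 1 = y := hky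
    have hxne : x ≠ 0 := (Finset.mem_erase.mp hxA).1
    have hxS : x ∈ S m := (Finset.mem_erase.mp hxA).2
    have hkpos := hKpos k hkK
    have hxk : x = k := by omega
    obtain ⟨q, hq, hkq, hkl⟩ := hgood k hkK
    exact not_in_S p k q hq hkq hkl (hxk ▸ hxS)
  have hBcard : B.card = A.card := by
    apply Finset.card_image_of_injOn
    intro x hx y hy hxy
    have hxy' : x - 1 = y - 1 := hxy
    have h1 : x ≠ 0 := (Finset.mem_erase.mp hx).1
    have h2 : y ≠ 0 := (Finset.mem_erase.mp hy).1
    omega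
  have hDcard : D.card = K.card := by
    apply Finset.card_image_of_injOn
    intro x hx y hy hxy
    have hxy' : x - 1 = y - 1 := hxy
    have h1 := hKpos x hx
    have h2 := hKpos y hy
    omega
  have hAcard : A.card = s m - 1 := by
    rw [hA, Finset.card_erase_of_mem h0Sm]
    rfl
  have hsm1 : 1 ≤ s m := Finset.card_pos.mpr ⟨0, h0Sm⟩
  have hunion : (B ∪ D).card ≤ s p :=
    Finset.card_le_card (Finset.union_subset hBS hDS)
  rw [Finset.card_union_of_disjoint hBD] at hunion
  omega

theorem diffs_unbounded :
    ∀ M : ℕ, ∀ N : ℕ, ∃ n ≥ N, s (n + 1) + M ≤ s n := by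
  intro M N
  obtain ⟨p, hp, hNp, K, hcard, hgood⟩ := chain (M + 1) (max N 3)
  have h3 : 3 ≤ max N 3 := le_max_right N 3
  have hN : N ≤ max N 3 := le_max_left N 3
  have := main_count p (by omega) K hgood
  exact ⟨p, by omega, by omega⟩
end

section
/- Suppose n + 1 has prime factorization p₁^{x₁} ⋯ p_ℓ^{x_ℓ} with p₁ < ⋯ < p_ℓ, and let 1 ≤ r < (n-2)/3. Then r ∈ S(n) and r + 1 ∉ S(n+1) if and only if there exists an index 2 ≤ I ≤ ℓ such that r + 1 = p_I^{x_I} ⋯ p_ℓ^{x_ℓ}, the number p₁^{x₁} ⋯ p_{I-1}^{x_{I-1}} - 1 is a prime p, and p ≤ p_I. -/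
lemma mem_S_iff_s13 {m v : ℕ} (hv : v ≤ m) :
    v ∈ S m ↔ ∃ k, v < k ∧ k ≤ m / 2 ∧ k ∣ m - v := by
  simp only [S, Finset.mem_image, Finset.mem_Icc]
  constructor
  · rintro ⟨k, ⟨hk1, hk2⟩, hmod⟩
    refine ⟨k, ?_, hk2, ?_⟩
    · exact hmod ▸ Nat.mod_lt _ hk1
    · have := Nat.mod_add_div m k
      exact ⟨m / k, by omega⟩
  · rintro ⟨k, hvk, hk2, hdvd⟩
    refine ⟨k, ⟨by omega, hk2⟩, ?_⟩
    obtain ⟨c, hc⟩ := hdvd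
    have : m = v + k * c := by omega
    rw [this, Nat.add_mul_mod_self_left, Nat.mod_eq_of_lt hvk]

lemma core (n r : ℕ) (hr1 : 1 ≤ r) (hr2 : 3 * r + 2 < n) :
    (r ∈ S n ∧ r + 1 ∉ S (n + 1)) ↔
      ((r + 1) ∣ n - r ∧ ∀ k, k ∣ n - r → r + 1 < k → (n + 1) / 2 < k) := by
  have h1 : r ≤ n := by omega
  have h2 : r + 1 ≤ n + 1 := by omega
  have hsub : n + 1 - (r + 1) = n - r := by omega
  rw [mem_S_iff_s13 h1, mem_S_iff_s13 h2, hsub]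
  constructor
  · rintro ⟨⟨k, hrk, hk2, hdvd⟩, hno⟩
    have hk : k = r + 1 := by
      by_contra hne
      exact hno ⟨k, by omega, le_trans hk2 (Nat.div_le_div_right (by omega)), hdvd⟩
    subst hk
    refine ⟨hdvd, fun k hd hlt => ?_⟩
    by_contra hle
    exact hno ⟨k, hlt, by omega, hd⟩
  · rintro ⟨hdvd, hno⟩
    constructor
    · exact ⟨r + 1, by omega, by omega, hdvd⟩
    · rintro ⟨k, hlt, hk2, hd⟩
      exact absurd hk2 (by have := hno k hd hlt; omega)

lemma prod_dvd_of_forall_dvd {ι : Type*} [DecidableEq ι] (s : Finset ι) (f : ι → ℕ) (T : ℕ)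
    (hcop : ∀ i ∈ s, ∀ j ∈ s, i ≠ j → Nat.Coprime (f i) (f j))
    (hdvd : ∀ i ∈ s, f i ∣ T) : (∏ i ∈ s, f i) ∣ T := by
  induction s using Finset.induction_on with
  | empty => simpa using one_dvd T
  | @insert a s ha ih =>
    rw [Finset.prod_insert ha]
    have h1 : (∏ i ∈ s, f i) ∣ T := ih
      (fun i hi j hj hij => hcop i (Finset.mem_insert_of_mem hi) j (Finset.mem_insert_of_mem hj) hij)
      (fun i hi => hdvd i (Finset.mem_insert_of_mem hi))
    have h2 : Nat.Coprime (f a) (∏ i ∈ s, f i) :=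
      Nat.Coprime.prod_right (fun i hi => hcop a (Finset.mem_insert_self a s) i
        (Finset.mem_insert_of_mem hi) (fun h => ha (h ▸ hi)))
    exact h2.mul_dvd_of_dvd_of_dvd (hdvd a (Finset.mem_insert_self a s)) h1

theorem not_transferred_iff_prime_factorization
    (n r ℓ : ℕ) (p x : Fin ℓ → ℕ)
    (hp : ∀ i, (p i).Prime) (hmono : StrictMono p) (hx : ∀ i, 0 < x i)
    (hn : n + 1 = ∏ i, p i ^ x i)
    (hr1 : 1 ≤ r) (hr2 : 3 * r + 2 < n) :
    (r ∈ S n ∧ r + 1 ∉ S (n + 1)) ↔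
    (∃ I : Fin ℓ, 0 < I.val ∧
      r + 1 = ∏ i ∈ Finset.univ.filter (fun i => I ≤ i), p i ^ x i ∧
      Nat.Prime ((∏ i ∈ Finset.univ.filter (fun i => i < I), p i ^ x i) - 1) ∧
      (∏ i ∈ Finset.univ.filter (fun i => i < I), p i ^ x i) - 1 ≤ p I) := by
  rw [core n r hr1 hr2]
  constructor
  · -- forward direction
    rintro ⟨hdvd, hno⟩
    set T := r + 1 with hTdef
    have hT2 : 2 ≤ T := by omega
    have hTn : T ∣ n + 1 := by
      have h : n + 1 = (n - r) + T := by omega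
      rw [h]; exact Nat.dvd_add hdvd dvd_rfl
    set H := (n + 1) / T with hHdef
    have hTH : n + 1 = T * H := (Nat.mul_div_cancel' hTn).symm
    have hH4 : 4 ≤ H := by
      by_contra h
      push_neg at h
      have : T * H ≤ T * 3 := Nat.mul_le_mul_left T (by omega)
      omega
    set q := H - 1 with hqdef
    have hHq : H = q + 1 := by omega
    have hnTq : n + 1 = T * (q + 1) := by rw [hTH, hHq]
    have hnTq' : n + 1 = T * q + T := by rw [hnTq]; ring
    have hnr : n - r = T * q := by omega
    rw [hnr] at hdvd hno
    -- q is prime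
    have hqprime : q.Prime := by
      by_contra hnp
      obtain ⟨a, hadvd, ha2, haq⟩ := Nat.exists_dvd_of_not_prime2 (by omega) hnp
      obtain ⟨b, hab⟩ := id hadvd
      have hb2 : 2 ≤ b := by
        match b, hab with
        | 0, hab => omega
        | 1, hab => omega
        | (k+2), hab => omega
      have hTTa : T < T * a := by
        have h := Nat.mul_le_mul_left T ha2
        omega
      have hk := hno (T * a) (mul_dvd_mul_left T hadvd) hTTa
      have h2a : 2 * a ≤ q + 1 := by
        have := Nat.mul_le_mul_left a hb2
        omega
      have : T * a ≤ (n + 1) / 2 := by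
        rw [Nat.le_div_iff_mul_le (by norm_num)]
        have h1 : T * (2 * a) ≤ T * (q + 1) := Nat.mul_le_mul_left T h2a
        calc T * a * 2 = T * (2 * a) := by ring
          _ ≤ T * (q + 1) := h1
          _ = n + 1 := hnTq.symm
      omega
    -- every prime factor of T is at least q
    have hTfac : ∀ ρ : ℕ, ρ.Prime → ρ ∣ T → q ≤ ρ := by
      intro ρ hρ hρT
      by_contra hlt
      push_neg at hlt
      obtain ⟨T', hT'⟩ := hρT
      have hTeq : T = T' * ρ := by rw [hT']; ring
      have hT'1 : 1 ≤ T' := by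
        rcases Nat.eq_zero_or_pos T' with h | h
        · rw [h, zero_mul] at hTeq; omega
        · exact h
      have hkgt : T < T' * q := by
        have h1 : T' * (ρ + 1) ≤ T' * q := Nat.mul_le_mul_left T' (by omega)
        have h2 : T' * (ρ + 1) = T' * ρ + T' := by ring
        omega
      have hk := hno (T' * q) ⟨ρ, by rw [hTeq]; ring⟩ hkgt
      have : T' * q ≤ (n + 1) / 2 := by
        rw [Nat.le_div_iff_mul_le (by norm_num)]
        have h1 : 2 * q ≤ ρ * (q + 1) := by
          have := Nat.mul_le_mul_right (q + 1) hρ.two_le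
          omega
        have h2 : T' * (2 * q) ≤ T' * (ρ * (q + 1)) := Nat.mul_le_mul_left T' h1
        have h3 : T' * (ρ * (q + 1)) = T * (q + 1) := by rw [hTeq]; ring
        calc T' * q * 2 = T' * (2 * q) := by ring
          _ ≤ T' * (ρ * (q + 1)) := h2
          _ = n + 1 := by rw [h3, ← hnTq]
      omega
    -- every prime factor of H is < q
    have hHfac : ∀ ρ : ℕ, ρ.Prime → ρ ∣ H → ρ < q := by
      intro ρ hρ hρH
      rw [hHq] at hρH
      have hρle : ρ ≤ q + 1 := Nat.le_of_dvd (by omega) hρH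
      have hqodd : Odd q := hqprime.odd_of_ne_two (by omega)
      have h1 : ρ ≠ q + 1 := by
        intro h
        have h2 : ρ = 2 := (Nat.Prime.even_iff hρ).mp (by
          rw [h]
          rcases hqodd with ⟨c, hc⟩
          exact ⟨c + 1, by omega⟩)
        omega
      have h2 : ρ ≠ q := by
        intro h
        rw [h] at hρH
        have hd1 := (Nat.dvd_add_right (dvd_refl q)).mp hρH
        have := Nat.le_of_dvd one_pos hd1
        omega
      omega
    classical
    set A : Finset (Fin ℓ) := Finset.univ.filter (fun i => p i ∣ T) with hAdef
    have hmemA : ∀ i, i ∈ A ↔ p i ∣ T := by intro i; simp [hAdef]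
    have hiH : ∀ i, i ∉ A → p i ∣ H := by
      intro i hi
      rw [hmemA] at hi
      have hpin : p i ∣ T * H := by
        rw [← hTH, hn]
        exact dvd_trans (dvd_pow_self (p i) (hx i).ne') (Finset.dvd_prod_of_mem _ (Finset.mem_univ i))
      exact ((Nat.Prime.dvd_mul (hp i)).mp hpin).resolve_left hi
    have hAup : ∀ i ∈ A, ∀ j, i ≤ j → j ∈ A := by
      intro i hi j hij
      by_contra hj
      have h1 : p j < q := hHfac (p j) (hp j) (hiH j hj)
      have h2 : q ≤ p i := hTfac (p i) (hp i) ((hmemA i).mp hi)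
      have h3 : p i ≤ p j := hmono.monotone hij
      omega
    have hAne : A.Nonempty := by
      have hmf : T.minFac ∣ n + 1 := dvd_trans (Nat.minFac_dvd T) hTn
      have hmfp : T.minFac.Prime := Nat.minFac_prime (by omega)
      rw [hn] at hmf
      obtain ⟨i, _, hi⟩ := hmfp.prime.exists_mem_finset_dvd hmf
      have heq : T.minFac = p i :=
        (Nat.prime_dvd_prime_iff_eq hmfp (hp i)).mp (hmfp.dvd_of_dvd_pow hi)
      exact ⟨i, (hmemA i).mpr (heq ▸ Nat.minFac_dvd T)⟩
    set I := A.min' hAne with hIdef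
    have hIA : I ∈ A := A.min'_mem hAne
    have hAeq : A = Finset.univ.filter (fun i => I ≤ i) := by
      ext j
      simp only [Finset.mem_filter, Finset.mem_univ, true_and]
      constructor
      · intro hj; exact A.min'_le j hj
      · intro hj; exact hAup I hIA j hj
    have hdvdT : ∀ i ∈ A, p i ^ x i ∣ T := by
      intro i hi
      have hpin : p i ^ x i ∣ T * H := by
        rw [← hTH, hn]
        exact Finset.dvd_prod_of_mem _ (Finset.mem_univ i)
      have hnd : ¬ p i ∣ H := by
        intro h
        have h1 := hHfac (p i) (hp i) h
        have h2 := hTfac (p i) (hp i) ((hmemA i).mp hi)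
        omega
      have hcop : Nat.Coprime (p i ^ x i) H :=
        Nat.Coprime.pow_left _ (((hp i).coprime_iff_not_dvd).mpr hnd)
      exact hcop.dvd_of_dvd_mul_right hpin
    have hprodA : (∏ i ∈ A, p i ^ x i) ∣ T := by
      apply prod_dvd_of_forall_dvd
      · intro i _ j _ hij
        have hpij : p i ≠ p j := fun h => hij (hmono.injective h)
        exact Nat.Coprime.pow _ _ ((Nat.coprime_primes (hp i) (hp j)).mpr hpij)
      · exact hdvdT
    have hsplitA : (∏ i, p i ^ x i) = (∏ i ∈ A, p i ^ x i) * ∏ i ∈ Finset.univ.filter (fun i => ¬ p i ∣ T), p i ^ x i := by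
      rw [hAdef]
      exact (Finset.prod_filter_mul_prod_filter_not Finset.univ _ _).symm
    have hTprodA : T ∣ ∏ i ∈ A, p i ^ x i := by
      have hTn' : T ∣ (∏ i ∈ A, p i ^ x i) * ∏ i ∈ Finset.univ.filter (fun i => ¬ p i ∣ T), p i ^ x i := by
        rw [← hsplitA, ← hn]; exact hTn
      refine Nat.Coprime.dvd_of_dvd_mul_right ?_ hTn'
      apply Nat.Coprime.prod_right
      intro i hi
      simp only [Finset.mem_filter] at hi
      exact Nat.Coprime.pow_right _
        (Nat.coprime_comm.mp (((hp i).coprime_iff_not_dvd).mpr hi.2))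
    have hTA : T = ∏ i ∈ A, p i ^ x i := Nat.dvd_antisymm hTprodA hprodA
    have hsplitI : (∏ i, p i ^ x i) =
        (∏ i ∈ Finset.univ.filter (fun i => i < I), p i ^ x i) *
        ∏ i ∈ Finset.univ.filter (fun i => I ≤ i), p i ^ x i := by
      have hfiltc : Finset.univ.filter (fun i : Fin ℓ => i < I) =
          Finset.univ.filter (fun i => ¬ I ≤ i) := by
        ext j; simp [not_le]
      rw [hfiltc, mul_comm]
      exact (Finset.prod_filter_mul_prod_filter_not Finset.univ _ _).symm
    have hTI : T = ∏ i ∈ Finset.univ.filter (fun i => I ≤ i), p i ^ x i := by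
      rw [hTA, hAeq]
    have hHI : H = ∏ i ∈ Finset.univ.filter (fun i => i < I), p i ^ x i := by
      have h1 : T * H = (∏ i ∈ Finset.univ.filter (fun i => i < I), p i ^ x i) * T := by
        rw [← hTH, hn, hsplitI, ← hTI]
      have h2 : T * H = T * ∏ i ∈ Finset.univ.filter (fun i => i < I), p i ^ x i := by
        rw [h1]; ring
      exact Nat.eq_of_mul_eq_mul_left (by omega) h2
    have hI0 : 0 < I.val := by
      by_contra hI
      push_neg at hI
      have hempty : Finset.univ.filter (fun i : Fin ℓ => i < I) = ∅ := by
        ext j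
        simp only [Finset.mem_filter, Finset.mem_univ, true_and, Finset.notMem_empty,
          iff_false, Fin.lt_def]
        omega
      rw [hempty, Finset.prod_empty] at hHI
      omega
    refine ⟨I, hI0, hTI, ?_, ?_⟩
    · rw [← hHI]
      have : H - 1 = q := by omega
      rw [this]; exact hqprime
    · rw [← hHI]
      have : q ≤ p I := hTfac (p I) (hp I) ((hmemA I).mp hIA)
      omega
  · -- backward direction
    rintro ⟨I, hI0, hT, hqp, hqle⟩
    set H := ∏ i ∈ Finset.univ.filter (fun i => i < I), p i ^ x i with hHdef
    set q := H - 1 with hqdef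
    have hq2 : 2 ≤ q := hqp.two_le
    have hHq : H = q + 1 := by omega
    have hsplitI : (∏ i, p i ^ x i) =
        H * ∏ i ∈ Finset.univ.filter (fun i => I ≤ i), p i ^ x i := by
      rw [hHdef]
      have hfiltc : Finset.univ.filter (fun i : Fin ℓ => i < I) =
          Finset.univ.filter (fun i => ¬ I ≤ i) := by
        ext j; simp [not_le]
      rw [hfiltc]
      exact (Finset.prod_filter_not_mul_prod_filter Finset.univ _ _).symm
    have hTH : n + 1 = H * (r + 1) := by rw [hn, hsplitI, ← hT]
    have hnTq : n + 1 = (r + 1) * q + (r + 1) := by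
      have : (q + 1) * (r + 1) = (r + 1) * q + (r + 1) := by ring
      rw [← this, ← hHq, ← hTH]
    have hnr : n - r = (r + 1) * q := by omega
    constructor
    · rw [hnr]; exact dvd_mul_right (r + 1) q
    · intro k hk hrk
      rw [hnr] at hk
      obtain ⟨d, hd⟩ := hk
      by_contra hle
      push_neg at hle
      have h2k : 2 * k ≤ n + 1 := by
        have := Nat.div_mul_le_self (n + 1) 2
        omega
      have hd0 : 0 < d := by
        rcases Nat.eq_zero_or_pos d with h | h
        · rw [h, mul_zero] at hd; omega
        · exact h
      have hd1 : d ≠ 1 := by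
        intro h
        rw [h, mul_one] at hd
        omega
      have hmfp := Nat.minFac_prime hd1
      have hmfd : d.minFac ∣ (r + 1) * q := by
        rw [hd]; exact dvd_mul_of_dvd_right (Nat.minFac_dvd d) k
      have hmfq : q ≤ d.minFac := by
        rcases (Nat.Prime.dvd_mul hmfp).mp hmfd with h | h
        · rw [hT] at h
          obtain ⟨i, hi, hdvd'⟩ := hmfp.prime.exists_mem_finset_dvd h
          simp only [Finset.mem_filter, Finset.mem_univ, true_and] at hi
          have heq : d.minFac = p i :=
            (Nat.prime_dvd_prime_iff_eq hmfp (hp i)).mp (hmfp.dvd_of_dvd_pow hdvd')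
          have hmle : p I ≤ p i := hmono.monotone hi
          omega
        · have heq : d.minFac = q := (Nat.prime_dvd_prime_iff_eq hmfp hqp).mp h
          omega
      have hqd : q ≤ d := le_trans hmfq (Nat.minFac_le hd0)
      have hkq : k * q ≤ k * d := Nat.mul_le_mul_left k hqd
      rw [← hd] at hkq
      have hkr : k ≤ r + 1 := Nat.le_of_mul_le_mul_right (by
        calc k * q ≤ (r + 1) * q := hkq
        ) (by omega)
      omega
end
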